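/- For the mutually unbiased noisy qubit observables A^{tx}(±) = (1/2)(I ± t σ₁) and A^{ty}(±) = (1/2)(I ± t σ₂) with 0 ≤ t ≤ 1, the pair is incompatible if and only if 1/√2 < t ≤ 1. -/

import Mathlib

open Matrix ComplexOrder

noncomputable section

abbrev Mat2 := Matrix (Fin 2) (Fin 2) ℂ

def sigma1 : Mat2 := !![0, 1; 1, 0]
def sigma2 : Mat2 := !![0, -Complex.I; Complex.I, 0]

/-- `A^{tx}(±) = (1/2)(I ± t σ₁)`, `true` = `+`. -/
def Atx (t : ℝ) (s : Bool) : Mat2 :=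
  ((1 : ℂ) / 2) • ((1 : Mat2) + (if s then (1 : ℂ) else -1) • ((t : ℂ) • sigma1))

/-- `A^{ty}(±) = (1/2)(I ± t σ₂)`, `true` = `+`. -/
def Aty (t : ℝ) (s : Bool) : Mat2 :=
  ((1 : ℂ) / 2) • ((1 : Mat2) + (if s then (1 : ℂ) else -1) • ((t : ℂ) • sigma2))

def IsPOVM {ι : Type*} [Fintype ι] {n : Type*} [Fintype n] [DecidableEq n]
    (G : ι → Matrix n n ℂ) : Prop :=
  (∀ i, (G i).PosSemidef) ∧ ∑ i, G i = 1

/-! For signs `a, b = ±1` the matrix `W_{ab} = (a σ₁ + b σ₂)/√2` is Hermitian with `W_{ab}² = 1`,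
so `1 ± W_{ab} = (1 ± W_{ab})ᴴ (1 ± W_{ab}) / 2` is positive semidefinite. If `G` is a joint POVM,
then `Re tr (W_{ab} G_{ab}) ≤ tr G_{ab}`; summing over `a, b` and using the marginal conditions turns
the left side into `2√2 t` and the right side into `tr 1 = 2`. Conversely, for `t√2 ≤ 1` the
operators `G_{ab} = (1 + t (a σ₁ + b σ₂))/4 = (1 + t√2 W_{ab})/4` form a joint POVM. -/
section Reflection

variable {n : Type*} [Fintype n] [DecidableEq n] {W : Matrix n n ℂ}

lemma conjTranspose_one_add_mul_self (hW : W.IsHermitian) (hW2 : W * W = 1) :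
    (1 + W)ᴴ * (1 + W) = (2 : ℝ) • (1 + W) := by
  rw [conjTranspose_add, conjTranspose_one, hW.eq, add_mul, mul_add, mul_add, hW2, two_smul]
  simp only [one_mul, mul_one]
  abel

lemma posSemidef_one_add (hW : W.IsHermitian) (hW2 : W * W = 1) : (1 + W).PosSemidef := by
  have h := (posSemidef_conjTranspose_mul_self (1 + W)).smul (a := (1 / 2 : ℝ)) (by norm_num)
  rwa [conjTranspose_one_add_mul_self hW hW2, smul_smul, one_div_mul_cancel two_ne_zero,
    one_smul] at h

lemma posSemidef_one_add_smul (hW : W.IsHermitian) (hW2 : W * W = 1) {c : ℝ} (hc0 : 0 ≤ c)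
    (hc1 : c ≤ 1) : (1 + c • W).PosSemidef := by
  have h : 1 + c • W = (1 - c) • (1 : Matrix n n ℂ) + c • (1 + W) := by module
  rw [h]
  exact (PosSemidef.one.smul (sub_nonneg.mpr hc1)).add ((posSemidef_one_add hW hW2).smul hc0)

lemma re_trace_mul_le_re_trace (hW : W.IsHermitian) (hW2 : W * W = 1) {G : Matrix n n ℂ}
    (hG : G.PosSemidef) : (trace (W * G)).re ≤ (trace G).re := by
  have h := (hG.mul_mul_conjTranspose_same (1 + -W)).trace_nonneg
  rw [trace_mul_cycle, conjTranspose_one_add_mul_self hW.neg (by rw [neg_mul_neg, hW2]),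
    smul_mul_assoc, trace_smul, add_mul, trace_add, neg_mul, trace_neg, one_mul] at h
  have hre := (Complex.le_def.mp h).1
  simp only [Complex.zero_re, Complex.smul_re, Complex.add_re, Complex.neg_re, smul_eq_mul] at hre
  linarith

end Reflection

def boolSign (s : Bool) : ℝ := if s then 1 else -1

@[simp] lemma boolSign_true : boolSign true = 1 := rfl

@[simp] lemma boolSign_false : boolSign false = -1 := rfl

lemma boolSign_sq (s : Bool) : boolSign s ^ 2 = 1 := by cases s <;> norm_num [boolSign]

def blochObs (a b : ℝ) : Mat2 := (a : ℂ) • sigma1 + (b : ℂ) • sigma2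

lemma isHermitian_blochObs (a b : ℝ) : (blochObs a b).IsHermitian := by
  ext i j
  fin_cases i <;> fin_cases j <;> simp [blochObs, sigma1, sigma2]

lemma blochObs_mul_self (a b : ℝ) : blochObs a b * blochObs a b = (a ^ 2 + b ^ 2 : ℝ) • 1 := by
  ext i j
  fin_cases i <;> fin_cases j <;> simp [blochObs, sigma1, sigma2, mul_apply, Fin.sum_univ_two] <;>
    ring_nf <;> simp only [Complex.I_sq, mul_neg, mul_one, sub_neg_eq_add]

lemma blochObs_smul (c a b : ℝ) : blochObs (c * a) (c * b) = c • blochObs a b := by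
  simp only [blochObs, Complex.ofReal_mul, smul_add, mul_smul, Complex.coe_smul]

lemma re_trace_blochObs_mul (a b : ℝ) (G : Mat2) :
    (trace (blochObs a b * G)).re = a * (trace (sigma1 * G)).re + b * (trace (sigma2 * G)).re := by
  simp [blochObs, add_mul, trace_add, trace_smul]

lemma re_trace_sigma1_mul_Atx (t : ℝ) (x : Bool) :
    (trace (sigma1 * Atx t x)).re = boolSign x * t := by
  cases x <;> simp [Atx, sigma1, boolSign, trace_fin_two, one_fin_two] <;> ring

lemma re_trace_sigma2_mul_Aty (t : ℝ) (y : Bool) :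
    (trace (sigma2 * Aty t y)).re = boolSign y * t := by
  cases y <;> simp [Aty, sigma2, boolSign, trace_fin_two, one_fin_two] <;> ring

def diagObs (p : Bool × Bool) : Mat2 := blochObs (boolSign p.1 / √2) (boolSign p.2 / √2)

lemma diagObs_mul_self (p : Bool × Bool) : diagObs p * diagObs p = 1 := by
  rw [diagObs, blochObs_mul_self, div_pow, div_pow, boolSign_sq, boolSign_sq,
    Real.sq_sqrt zero_le_two]
  norm_num

def IsJointMeasurement (G : Bool × Bool → Mat2) (A B : Bool → Mat2) : Prop :=
  IsPOVM G ∧ (∀ x, G (x, true) + G (x, false) = A x) ∧ (∀ y, G (true, y) + G (false, y) = B y)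

lemma mul_sqrt_two_le_one_of_isJointMeasurement {t : ℝ} {G : Bool × Bool → Mat2}
    (hG : IsJointMeasurement G (Atx t) (Aty t)) : t * √2 ≤ 1 := by
  obtain ⟨⟨hpsd, hsum⟩, hx, hy⟩ := hG
  have hbound : ∑ p, (trace (diagObs p * G p)).re ≤ ∑ p, (trace (G p)).re :=
    Finset.sum_le_sum fun p _ ↦
      re_trace_mul_le_re_trace (isHermitian_blochObs _ _) (diagObs_mul_self p) (hpsd p)
  have htrace : ∑ p, (trace (G p)).re = 2 := by
    rw [← Complex.re_sum, ← trace_sum, hsum]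
    simp
  have hxTrace (x : Bool) :
      (trace (sigma1 * G (x, true))).re + (trace (sigma1 * G (x, false))).re = boolSign x * t := by
    rw [← re_trace_sigma1_mul_Atx t x, ← hx x, mul_add, trace_add, Complex.add_re]
  have hyTrace (y : Bool) :
      (trace (sigma2 * G (true, y))).re + (trace (sigma2 * G (false, y))).re = boolSign y * t := by
    rw [← re_trace_sigma2_mul_Aty t y, ← hy y, mul_add, trace_add, Complex.add_re]
  have hsig : √2 * ∑ p, (trace (diagObs p * G p)).re = 4 * t := by
    have hs : √2 ≠ 0 := by positivity
    simp only [diagObs, re_trace_blochObs_mul, Fintype.sum_prod_type, Fintype.sum_bool,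
      boolSign_true, boolSign_false]
    field_simp
    linear_combination (norm := (simp only [boolSign_true, boolSign_false]; ring))
      hxTrace true - hxTrace false + hyTrace true - hyTrace false
  nlinarith [Real.sq_sqrt (zero_le_two (α := ℝ)), Real.sqrt_nonneg 2]

def jointPOVM (t : ℝ) (p : Bool × Bool) : Mat2 :=
  (1 / 4 : ℝ) • (1 + blochObs (boolSign p.1 * t) (boolSign p.2 * t))

lemma isJointMeasurement_jointPOVM {t : ℝ} (ht0 : 0 ≤ t) (ht : t * √2 ≤ 1) :
    IsJointMeasurement (jointPOVM t) (Atx t) (Aty t) := by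
  refine ⟨⟨fun p ↦ ?_, ?_⟩, fun x ↦ ?_, fun y ↦ ?_⟩
  · have h : blochObs (boolSign p.1 * t) (boolSign p.2 * t) = (t * √2) • diagObs p := by
      rw [diagObs, ← blochObs_smul]
      congr 1 <;> field_simp
    rw [jointPOVM, h]
    exact (posSemidef_one_add_smul (isHermitian_blochObs _ _) (diagObs_mul_self p)
      (by positivity) ht).smul (by norm_num)
  · ext i j
    fin_cases i <;> fin_cases j <;>
      simp [jointPOVM, blochObs, sigma1, sigma2, Fintype.sum_prod_type] <;> ring
  · ext i j
    cases x <;> fin_cases i <;> fin_cases j <;>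
      simp [jointPOVM, Atx, blochObs, sigma1, sigma2] <;> ring
  · ext i j
    cases y <;> fin_cases i <;> fin_cases j <;>
      simp [jointPOVM, Aty, blochObs, sigma1, sigma2] <;> ring

theorem mub_qubit_incompatible_iff_general (t : ℝ) (ht0 : 0 ≤ t) :
    (¬ ∃ G : Bool × Bool → Mat2, IsPOVM G ∧
      (∀ x, G (x, true) + G (x, false) = Atx t x) ∧
      (∀ y, G (true, y) + G (false, y) = Aty t y)) ↔
    1 / Real.sqrt 2 < t := by
  rw [div_lt_iff₀ (by positivity)]
  constructor
  · intro hincompatible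
    by_contra! hle
    exact hincompatible ⟨jointPOVM t, isJointMeasurement_jointPOVM ht0 hle⟩
  · rintro hlt ⟨G, hG⟩
    exact (mul_sqrt_two_le_one_of_isJointMeasurement hG).not_gt hlt

/-- The mutually unbiased noisy qubit observables `A^{tx}`, `A^{ty}` (0 ≤ t ≤ 1) are
incompatible iff `1/√2 < t ≤ 1`. -/
theorem mub_qubit_incompatible_iff (t : ℝ) (ht0 : 0 ≤ t) (ht1 : t ≤ 1) :
    (¬ ∃ G : Bool × Bool → Mat2, IsPOVM G ∧
      (∀ x, G (x, true) + G (x, false) = Atx t x) ∧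
      (∀ y, G (true, y) + G (false, y) = Aty t y)) ↔
    1 / Real.sqrt 2 < t :=
  mub_qubit_incompatible_iff_general t ht0
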